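/- arXiv:math/9812033 — 4 statements merged into one kernel-verified Lean document; each statement's English description precedes it below -/
import Mathlib

section
/- Let d = 2r be even with r ≥ 1 and Q = [−1,1]^r ⊆ ℝ^r. Then conv((Q × 2Q) ∪ (2Q × Q)) = { x ∈ ℝ^d : ±x_i ≤ 2 for 1 ≤ i ≤ d, and ±x_i ± x_j ≤ 3 for all 1 ≤ i ≤ r < j ≤ d and all four choices of signs }. -/
open Set

/-- `Q × 2Q ⊆ ℝ^{2r}`: first `r` coordinates in `[−1,1]`, last `r` in `[−2,2]`. -/
def boxQ2Q (r : ℕ) : Set (Fin (2 * r) → ℝ) :=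
  {x | ∀ i : Fin (2 * r), (i.1 < r → |x i| ≤ 1) ∧ (r ≤ i.1 → |x i| ≤ 2)}

/-- `2Q × Q ⊆ ℝ^{2r}`: first `r` coordinates in `[−2,2]`, last `r` in `[−1,1]`. -/
def box2QQ (r : ℕ) : Set (Fin (2 * r) → ℝ) :=
  {x | ∀ i : Fin (2 * r), (i.1 < r → |x i| ≤ 2) ∧ (r ≤ i.1 → |x i| ≤ 1)}

lemma sign_mul_le_abs {s v : ℝ} (hs : s = 1 ∨ s = -1) : s * v ≤ |v| := by
  rcases hs with rfl | rfl
  · simpa using le_abs_self v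
  · simpa using neg_le_abs v

/-- The H-description of `conv((Q×2Q) ∪ (2Q×Q))`:
`±x_i ≤ 2` for all `i`, and `±x_i ± x_j ≤ 3` for `1 ≤ i ≤ r < j ≤ 2r`
(all four sign choices). -/
theorem conv_union_eq_halfspaces (r : ℕ) (hr : 1 ≤ r) :
    convexHull ℝ (boxQ2Q r ∪ box2QQ r) =
      {x : Fin (2 * r) → ℝ |
        (∀ i : Fin (2 * r), ∀ s : ℝ, (s = 1 ∨ s = -1) → s * x i ≤ 2) ∧
        (∀ i j : Fin (2 * r), i.1 < r → r ≤ j.1 →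
          ∀ s t : ℝ, (s = 1 ∨ s = -1) → (t = 1 ∨ t = -1) →
            s * x i + t * x j ≤ 3)} := by
  apply Subset.antisymm
  · apply convexHull_min
    · rintro x (hx | hx)
      · constructor
        · intro i s hs
          have h2 : |x i| ≤ 2 := by
            rcases lt_or_ge i.1 r with h | h
            · exact le_trans ((hx i).1 h) one_le_two
            · exact (hx i).2 h
          exact le_trans (sign_mul_le_abs hs) h2
        · intro i j hi hj s t hs ht
          have h1 : |x i| ≤ 1 := (hx i).1 hi
          have h2 : |x j| ≤ 2 := (hx j).2 hj
          have e1 := sign_mul_le_abs (v := x i) hs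
          have e2 := sign_mul_le_abs (v := x j) ht
          linarith
      · constructor
        · intro i s hs
          have h2 : |x i| ≤ 2 := by
            rcases lt_or_ge i.1 r with h | h
            · exact (hx i).1 h
            · exact le_trans ((hx i).2 h) one_le_two
          exact le_trans (sign_mul_le_abs hs) h2
        · intro i j hi hj s t hs ht
          have h1 : |x i| ≤ 2 := (hx i).1 hi
          have h2 : |x j| ≤ 1 := (hx j).2 hj
          have e1 := sign_mul_le_abs (v := x i) hs
          have e2 := sign_mul_le_abs (v := x j) ht
          linarith
    · intro x hx y hy a b ha hb hab
      constructor
      · intro i s hs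
        have h1 := hx.1 i s hs
        have h2 := hy.1 i s hs
        simp only [Pi.add_apply, Pi.smul_apply, smul_eq_mul]
        nlinarith
      · intro i j hi hj s t hs ht
        have h1 := hx.2 i j hi hj s t hs ht
        have h2 := hy.2 i j hi hj s t hs ht
        simp only [Pi.add_apply, Pi.smul_apply, smul_eq_mul]
        nlinarith
  · rintro x ⟨h1, h2⟩
    have habs : ∀ i : Fin (2 * r), |x i| ≤ 2 := by
      intro i
      have ha := h1 i 1 (Or.inl rfl)
      have hb := h1 i (-1) (Or.inr rfl)
      rw [abs_le]; constructor <;> linarith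
    have hpair : ∀ i j : Fin (2 * r), i.1 < r → r ≤ j.1 → |x i| + |x j| ≤ 3 := by
      intro i j hi hj
      rcases le_total 0 (x i) with hxi | hxi <;> rcases le_total 0 (x j) with hxj | hxj
      · have := h2 i j hi hj 1 1 (Or.inl rfl) (Or.inl rfl)
        rw [abs_of_nonneg hxi, abs_of_nonneg hxj]; linarith
      · have := h2 i j hi hj 1 (-1) (Or.inl rfl) (Or.inr rfl)
        rw [abs_of_nonneg hxi, abs_of_nonpos hxj]; linarith
      · have := h2 i j hi hj (-1) 1 (Or.inr rfl) (Or.inl rfl)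
        rw [abs_of_nonpos hxi, abs_of_nonneg hxj]; linarith
      · have := h2 i j hi hj (-1) (-1) (Or.inr rfl) (Or.inr rfl)
        rw [abs_of_nonpos hxi, abs_of_nonpos hxj]; linarith
    set S : Finset (Fin (2 * r)) := Finset.univ.filter (fun j => r ≤ j.1) with hSdef
    have hS : S.Nonempty := ⟨⟨r, by omega⟩, by simp [hSdef]⟩
    have hmemS : ∀ j : Fin (2 * r), j ∈ S ↔ r ≤ j.1 := by
      intro j; simp [hSdef]
    set lam : ℝ := max 0 (S.sup' hS (fun j => |x j| - 1)) with hlamdef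
    have hlam0 : (0 : ℝ) ≤ lam := le_max_left _ _
    have hlam1 : lam ≤ 1 := by
      apply max_le zero_le_one
      apply Finset.sup'_le
      intro j hj
      have := habs j
      linarith
    have hfirst : ∀ i : Fin (2 * r), i.1 < r → |x i| ≤ 2 - lam := by
      intro i hi
      have : lam ≤ 2 - |x i| := by
        apply max_le
        · have := habs i; linarith
        · apply Finset.sup'_le
          intro j hj
          have := hpair i j hi ((hmemS j).1 hj)
          linarith
      linarith
    have hlast : ∀ j : Fin (2 * r), r ≤ j.1 → |x j| ≤ 1 + lam := by
      intro j hj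
      have h := Finset.le_sup' (fun j => |x j| - 1) ((hmemS j).2 hj)
      have := le_max_right (0 : ℝ) (S.sup' hS (fun j => |x j| - 1))
      linarith
    have hpos1 : (0 : ℝ) < 2 - lam := by linarith
    have hpos2 : (0 : ℝ) < 1 + lam := by linarith
    set y : Fin (2 * r) → ℝ :=
      fun i => if i.1 < r then x i / (2 - lam) else 2 * x i / (1 + lam) with hydef
    set z : Fin (2 * r) → ℝ :=
      fun i => if i.1 < r then 2 * x i / (2 - lam) else x i / (1 + lam) with hzdef
    have hy : y ∈ boxQ2Q r := by
      intro i
      constructor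
      · intro hi
        simp only [hydef, if_pos hi]
        rw [abs_div, abs_of_pos hpos1, div_le_one hpos1]
        have := hfirst i hi; linarith
      · intro hi
        simp only [hydef, if_neg (not_lt.2 hi)]
        rw [abs_div, abs_of_pos hpos2, div_le_iff₀ hpos2, abs_mul]
        have := hlast i hi
        have : |x i| ≤ 1 + lam := this
        simp only [abs_two]
        nlinarith
    have hz : z ∈ box2QQ r := by
      intro i
      constructor
      · intro hi
        simp only [hzdef, if_pos hi]
        rw [abs_div, abs_of_pos hpos1, div_le_iff₀ hpos1, abs_mul]
        have := hfirst i hi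
        simp only [abs_two]
        nlinarith
      · intro hi
        simp only [hzdef, if_neg (not_lt.2 hi)]
        rw [abs_div, abs_of_pos hpos2, div_le_one hpos2]
        have := hlast i hi; linarith
    have hne1 : (2 : ℝ) - lam ≠ 0 := ne_of_gt hpos1
    have hne2 : (1 : ℝ) + lam ≠ 0 := ne_of_gt hpos2
    have hcomb : x = lam • y + (1 - lam) • z := by
      funext i
      simp only [Pi.add_apply, Pi.smul_apply, smul_eq_mul, hydef, hzdef]
      split_ifs with h
      · field_simp
        ring
      · field_simp
        ring
    have hy' : y ∈ convexHull ℝ (boxQ2Q r ∪ box2QQ r) :=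
      subset_convexHull ℝ _ (Set.mem_union_left _ hy)
    have hz' : z ∈ convexHull ℝ (boxQ2Q r ∪ box2QQ r) :=
      subset_convexHull ℝ _ (Set.mem_union_right _ hz)
    rw [hcomb]
    exact (convex_convexHull ℝ _) hy' hz' hlam0 (by linarith) (by ring)
end

section
/- Let n > d ≥ 2 be integers and define the (n−1) × (n−d) matrix Ā with rows indexed by k ∈ {2, 3, …, n} and columns indexed by j ∈ {1, …, n−d}, whose entries are Ā_{kj} = (−1)^k · C(k−2, j−1). Then every (n−d) × (n−d) submatrix of Ā obtained by selecting n−d of the rows has nonzero determinant. -/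
open Polynomial

/-- Every maximal minor of the `(n−1) × (n−d)` matrix `Ā` with entries
`Ā_{kj} = (−1)^k · C(k−2, j−1)` (rows `k ∈ {2,…,n}`, columns `j ∈ {1,…,n−d}`)
is nonzero: selecting any `n−d` rows yields a matrix with nonzero determinant.
(Row `a` of the submatrix is row `k = (ρ a).1 + 2`; column `b` is `j = b.1 + 1`.) -/
theorem maximal_minors_nonzero (n d : ℕ) (hd : 2 ≤ d) (hn : d < n)
    (ρ : Fin (n - d) → Fin (n - 1)) (hρ : Function.Injective ρ) :
    Matrix.det (Matrix.of fun a b : Fin (n - d) =>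
      (-1 : ℝ) ^ ((ρ a).1 + 2) * (((ρ a).1.choose b.1 : ℕ) : ℝ)) ≠ 0 := by
  have h1 : Matrix.det (Matrix.of fun a b : Fin (n - d) =>
      (-1 : ℝ) ^ ((ρ a).1 + 2) * (((ρ a).1.choose b.1 : ℕ) : ℝ))
      = (∏ a : Fin (n - d), (-1 : ℝ) ^ ((ρ a).1 + 2)) *
        Matrix.det (Matrix.of fun a b : Fin (n - d) => (((ρ a).1.choose b.1 : ℕ) : ℝ)) :=
    Matrix.det_mul_column _ _
  rw [h1]
  apply mul_ne_zero
  · apply Finset.prod_ne_zero_iff.mpr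
    intro a _
    exact pow_ne_zero _ (by norm_num)
  · -- choose matrix has nonzero determinant via Vandermonde
    have key : Matrix.det (Matrix.of fun a b : Fin (n - d) =>
        ((b.1.factorial : ℕ) : ℝ) * (((ρ a).1.choose b.1 : ℕ) : ℝ))
        = (∏ b : Fin (n - d), ((b.1.factorial : ℕ) : ℝ)) *
          Matrix.det (Matrix.of fun a b : Fin (n - d) => (((ρ a).1.choose b.1 : ℕ) : ℝ)) :=
      Matrix.det_mul_row _ _
    have hvand : Matrix.det (Matrix.of fun a b : Fin (n - d) =>
        ((b.1.factorial : ℕ) : ℝ) * (((ρ a).1.choose b.1 : ℕ) : ℝ))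
        = (Matrix.vandermonde fun a : Fin (n - d) => (((ρ a).1 : ℕ) : ℝ)).det := by
      have := Matrix.det_eval_matrixOfPolynomials_eq_det_vandermonde
        (fun a : Fin (n - d) => (((ρ a).1 : ℕ) : ℝ))
        (fun b : Fin (n - d) => descPochhammer ℝ b.1)
        (fun b => descPochhammer_natDegree ℝ b.1)
        (fun b => monic_descPochhammer ℝ b.1)
      rw [this]
      congr 1
      ext a b
      simp only [Matrix.of_apply]
      rw [descPochhammer_eval_eq_descFactorial ℝ (ρ a).1 b.1,
        Nat.descFactorial_eq_factorial_mul_choose, Nat.cast_mul]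
    have hprod : (∏ b : Fin (n - d), ((b.1.factorial : ℕ) : ℝ)) ≠ 0 := by
      apply Finset.prod_ne_zero_iff.mpr
      intro b _
      exact_mod_cast b.1.factorial_ne_zero
    have hinj : Function.Injective (fun a : Fin (n - d) => (((ρ a).1 : ℕ) : ℝ)) := by
      intro a b h
      exact hρ (Fin.ext (Nat.cast_injective h))
    have hv : (Matrix.vandermonde fun a : Fin (n - d) => (((ρ a).1 : ℕ) : ℝ)).det ≠ 0 :=
      Matrix.det_vandermonde_ne_zero_iff.mpr hinj
    intro hzero
    rw [hzero, mul_zero] at key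
    exact hv (hvand ▸ key)
end

section
/- Let d ≥ 2, and let k, m ≥ 0 and l ≥ 1 satisfy k + l + m = d + 1. For each i with 2 ≤ i ≤ d+1, the number of (d+1−i)-dimensional faces G of the (d+1)-cube C^{d+1} such that G lies in some facet belonging to B(k,l,m) and also in some facet of C^{d+1} not belonging to B(k,l,m) equals C(d+1, i)·2^i − Σ_{j=0}^{i} C(l, i−j)·( C(k,j) + C(m,j) )·2^j. Equivalently, this is the number of (d+1−i)-faces of the liftable cubical d-polytope P(k,l,m). -/
/-!
A nonempty face of the cube `[0,1]^n` is determined by a partial sign pattern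
`σ : Fin n → Option Bool` fixing some coordinates at `0` or `1` and leaving the others free:
the face of `σ` is exposed by `x ↦ ∑ ±x_j` (signs from `σ`), and conversely a functional
exposes the face of the sign pattern of its coefficients. The face has codimension the number
of fixed coordinates and lies in `F_j^±` exactly when `σ` fixes `j` to `±`.

So we count patterns with `i` fixed coordinates, at least one of them pointing to a facet of
`B(k,l,m)` and at least one to a facet outside it. Since `i > 0`, every other pattern uses only
ball facets or only non-ball facets, and not both. Patterns allowing `w_j` signs at coordinate
`j` are counted by the coefficient of `X^i` in `∏ (1 + w_j X)`: this is `(1+2X)^(d+1)` for all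
patterns, `(1+2X)^k (1+X)^l` for those using only ball facets and `(1+X)^l (1+2X)^m` for those
avoiding them.
-/

open Set

noncomputable def setDim {n : ℕ} (S : Set (Fin n → ℝ)) : ℕ :=
  Module.finrank ℝ (vectorSpan ℝ S)

def IsFaceDim {n : ℕ} (P F : Set (Fin n → ℝ)) (k : ℕ) : Prop :=
  IsExposed ℝ P F ∧ F.Nonempty ∧ setDim F = k

def stdCube (n : ℕ) : Set (Fin n → ℝ) := {x | ∀ i, x i ∈ Set.Icc (0:ℝ) 1}

/-- The facet `F_j^+` (for `b = true`) resp. `F_j^-` (for `b = false`) of the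
standard cube. -/
def cubeFacet (m : ℕ) (j : Fin m) (b : Bool) : Set (Fin m → ℝ) :=
  {x ∈ stdCube m | x j = if b then 1 else 0}

/-- The facets of `C^{d+1}` that belong to the ball `B(k,l,m)` (0-indexed):
`F_j^±` for `j < k` and `F_j^+` for `k ≤ j < k+l`. -/
def inBall (k l : ℕ) (j : ℕ) (b : Bool) : Prop :=
  j < k ∨ (b = true ∧ j < k + l)

open Finset Polynomial

section CubeFaces

variable {n : ℕ}

def cubeFace (σ : Fin n → Option Bool) : Set (Fin n → ℝ) :=
  {x ∈ stdCube n | ∀ j b, σ j = some b → x j = if b then 1 else 0}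

def cubeFaceVertex (σ : Fin n → Option Bool) : Fin n → ℝ :=
  fun j => if σ j = some true then 1 else 0

lemma cubeFaceVertex_mem (σ : Fin n → Option Bool) : cubeFaceVertex σ ∈ cubeFace σ := by
  refine ⟨fun j => ?_, fun j b hb => ?_⟩ <;> unfold cubeFaceVertex
  · split_ifs <;> simp
  · cases b <;> simp [hb]

lemma cubeFaceVertex_add_single_mem {σ : Fin n → Option Bool} {j : Fin n} (hj : σ j = none) :
    cubeFaceVertex σ + Pi.single j 1 ∈ cubeFace σ := by
  obtain ⟨hcube, hfixed⟩ := cubeFaceVertex_mem σ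
  refine ⟨fun i => ?_, fun i b hb => ?_⟩
  · rcases eq_or_ne i j with rfl | hij
    · simp [cubeFaceVertex, hj]
    · simpa [hij] using hcube i
  · have hij : i ≠ j := by rintro rfl; simp [hj] at hb
    simpa [hij] using hfixed i b hb

noncomputable def signPattern (c : ℝ) : Option Bool :=
  if 0 < c then some true else if c < 0 then some false else none

lemma mul_le_max_zero {t : ℝ} (ht : t ∈ Icc (0 : ℝ) 1) (c : ℝ) : t * c ≤ max c 0 := by
  rcases le_or_gt 0 c with hc | hc
  · nlinarith [ht.2, le_max_left c 0]
  · nlinarith [ht.1, le_max_right c 0]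

lemma mul_eq_max_zero_iff (t c : ℝ) :
    t * c = max c 0 ↔ ∀ b, signPattern c = some b → t = if b then 1 else 0 := by
  rcases lt_trichotomy c 0 with hc | rfl | hc
  · simp [signPattern, hc, hc.not_gt, hc.ne, max_eq_right hc.le]
  · simp [signPattern]
  · simp [signPattern, hc, hc.ne', max_eq_left hc.le]

lemma cubeFace_signPattern_eq (l : StrongDual ℝ (Fin n → ℝ)) :
    cubeFace (fun j => signPattern (l (Pi.single j 1)))
      = {x ∈ stdCube n | ∀ y ∈ stdCube n, l y ≤ l x} := by
  set c := fun j => l (Pi.single j 1)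
  have hl : ∀ x, l x = ∑ j, x j * c j := fun x => by
    conv_lhs => rw [pi_eq_sum_univ' x]
    simp [c]
  -- on the cube `x j * c j ≤ max (c j) 0` termwise, with equality in every term exactly on the
  -- face, which contains a vertex
  have hle : ∀ y ∈ stdCube n, l y ≤ ∑ j, max (c j) 0 := fun y hy => by
    rw [hl]; exact sum_le_sum fun j _ => mul_le_max_zero (hy j) (c j)
  have hface : ∀ x ∈ stdCube n,
      x ∈ cubeFace (fun j => signPattern (c j)) ↔ l x = ∑ j, max (c j) 0 := fun x hx => by
    rw [hl, sum_eq_sum_iff_of_le fun j _ => mul_le_max_zero (hx j) (c j)]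
    simp [cubeFace, hx, mul_eq_max_zero_iff]
  ext x
  constructor
  · intro hx
    exact ⟨hx.1, fun y hy => (hface x hx.1).1 hx ▸ hle y hy⟩
  · rintro ⟨hx, hmax⟩
    have hv := cubeFaceVertex_mem fun j => signPattern (c j)
    rw [hface x hx]
    exact le_antisymm (hle x hx) ((hface _ hv.1).1 hv ▸ hmax _ hv.1)

lemma cubeFace_isExposed (σ : Fin n → Option Bool) :
    IsExposed ℝ (stdCube n) (cubeFace σ) := by
  intro _
  let w : Option Bool → ℝ := fun o => o.elim 0 fun b => if b then 1 else -1
  refine ⟨∑ j, w (σ j) • ContinuousLinearMap.proj j, ?_⟩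
  rw [← cubeFace_signPattern_eq]
  congr 1
  funext j
  rcases hσ : σ j with _ | _ | _ <;> simp [w, signPattern, Pi.single_apply, hσ]

lemma vectorSpan_cubeFace (σ : Fin n → Option Bool) :
    vectorSpan ℝ (cubeFace σ)
      = Submodule.span ℝ (Pi.basisFun ℝ (Fin n) '' {j | σ j = none}) := by
  apply le_antisymm
  · rw [vectorSpan_def, Submodule.span_le]
    rintro _ ⟨x, ⟨-, hx⟩, y, ⟨-, hy⟩, rfl⟩
    rw [SetLike.mem_coe, Module.Basis.mem_span_image]
    intro j hj
    by_contra hfree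
    obtain ⟨b, hb⟩ := Option.ne_none_iff_exists'.1 hfree
    simp [hx j b hb, hy j b hb] at hj
  · rw [Submodule.span_le]
    rintro _ ⟨j, hj, rfl⟩
    simpa using vsub_mem_vectorSpan ℝ (cubeFaceVertex_add_single_mem hj) (cubeFaceVertex_mem σ)

lemma setDim_cubeFace (σ : Fin n → Option Bool) : setDim (cubeFace σ) = #{j | σ j = none} := by
  have hli := (Pi.basisFun ℝ (Fin n)).linearIndependent.comp
    (Subtype.val : {j | σ j = none} → Fin n) Subtype.val_injective
  rw [setDim, vectorSpan_cubeFace, image_eq_range]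
  exact (finrank_span_eq_card hli).trans (Fintype.card_subtype _)

lemma cubeFace_subset_cubeFacet_iff (σ : Fin n → Option Bool) (j : Fin n) (b : Bool) :
    cubeFace σ ⊆ cubeFacet n j b ↔ σ j = some b := by
  refine ⟨fun h => ?_, fun hb x hx => ⟨hx.1, hx.2 j b hb⟩⟩
  have hv := (h (cubeFaceVertex_mem σ)).2
  rcases hσ : σ j with _ | b'
  · have hv' := (h (cubeFaceVertex_add_single_mem hσ)).2
    cases b <;> simp [cubeFaceVertex, hσ] at hv hv'
  · cases b <;> cases b' <;> simp [cubeFaceVertex, hσ] at hv ⊢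

lemma cubeFace_injective : Function.Injective (cubeFace (n := n)) := fun σ τ h =>
  funext fun j => Option.ext fun b => by
    simp only [← cubeFace_subset_cubeFacet_iff, h]

lemma isFaceDim_stdCube_iff {G : Set (Fin n → ℝ)} {e : ℕ} :
    IsFaceDim (stdCube n) G e ↔ ∃ σ, G = cubeFace σ ∧ #{j | σ j = none} = e := by
  constructor
  · rintro ⟨hexp, hne, rfl⟩
    obtain ⟨l, rfl⟩ := hexp hne
    refine ⟨_, (cubeFace_signPattern_eq l).symm, ?_⟩
    rw [← cubeFace_signPattern_eq, setDim_cubeFace]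
  · rintro ⟨σ, rfl, rfl⟩
    exact ⟨cubeFace_isExposed σ, ⟨_, cubeFaceVertex_mem σ⟩, setDim_cubeFace σ⟩

lemma ncard_setOf_isFaceDim_stdCube_and (e : ℕ) (Q : Set (Fin n → ℝ) → Prop) :
    {G | IsFaceDim (stdCube n) G e ∧ Q G}.ncard
      = {σ : Fin n → Option Bool | #{j | σ j = none} = e ∧ Q (cubeFace σ)}.ncard := by
  rw [← ncard_image_of_injective _ cubeFace_injective]
  congr 1
  ext G
  simp only [isFaceDim_stdCube_iff, mem_image]
  aesop

end CubeFaces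

section Polynomials

variable {R : Type*} [CommSemiring R]

lemma coeff_one_add_C_mul_X_pow (a : R) (s j : ℕ) :
    ((1 + C a * X) ^ s).coeff j = s.choose j * a ^ j := by
  have : (1 + C a * X) ^ s = ((1 + X) ^ s).comp (C a * X) := by simp [add_comp]
  rw [this, comp_C_mul_X_coeff, coeff_one_add_X_pow]

lemma coeff_one_add_C_mul_X_pow_mul_one_add_X_pow (a : R) (s t i : ℕ) :
    ((1 + C a * X) ^ s * (1 + X) ^ t).coeff i
      = ∑ j ∈ range (i + 1), s.choose j * a ^ j * t.choose (i - j) := by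
  rw [coeff_mul, Nat.sum_antidiagonal_eq_sum_range_succ_mk]
  simp only [coeff_one_add_C_mul_X_pow, coeff_one_add_X_pow]

end Polynomials

lemma prod_fin_ite_lt_ite_lt {M : Type*} [CommMonoid M] {n k l m : ℕ} (h : k + l + m = n)
    (a b c : M) :
    ∏ j : Fin n, (if (j : ℕ) < k then a else if (j : ℕ) < k + l then b else c)
      = a ^ k * b ^ l * c ^ m := by
  subst h
  rw [Fin.prod_univ_eq_prod_range (fun j => if j < k then a else if j < k + l then b else c),
    prod_range_add, prod_range_add, prod_eq_pow_card (b := a), prod_eq_pow_card (b := b),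
    prod_eq_pow_card (b := c)] <;>
    simp +contextual [show ∀ j, ¬ k + l + j < k by omega,
      show ∀ j, ¬ k + l + j < k + l by omega]

lemma card_filter_and_add_card_filter_not_add_card_filter_not {α : Type*} (s : Finset α)
    (P Q : α → Prop) [DecidablePred P] [DecidablePred Q] (h : ∀ x ∈ s, P x ∨ Q x) :
    #{x ∈ s | P x ∧ Q x} + #{x ∈ s | ¬ P x} + #{x ∈ s | ¬ Q x} = #s := by
  have hnotQ : {x ∈ s | P x ∧ ¬ Q x} = {x ∈ s | ¬ Q x} :=
    filter_congr fun x hx => ⟨And.right, fun hQ => ⟨(h x hx).resolve_right hQ, hQ⟩⟩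
  rw [← card_filter_add_card_filter_not (s := s) P,
    ← card_filter_add_card_filter_not (s := {x ∈ s | P x}) Q]
  simp only [filter_filter, hnotQ]
  omega

section SignPatternCount

variable {ι : Type*} [Fintype ι] [DecidableEq ι]

lemma card_signPatterns_avoiding_eq_coeff (q : ι → Bool → Prop) [∀ j, DecidablePred (q j)]
    (i : ℕ) :
    #{σ : ι → Option Bool | #{j | σ j ≠ none} = i ∧ ¬ ∃ j b, q j b ∧ σ j = some b}
      = (∏ j, (1 + C (#{b | ¬ q j b} : ℕ) * X : ℕ[X])).coeff i := by
  -- expanding the product, each admissible `σ` contributes `X ^ #{j | σ j ≠ none}`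
  let t : ι → Finset (Option Bool) := fun j => {o | ∀ b, o = some b → ¬ q j b}
  have hfactor : ∀ j, 1 + C (#{b | ¬ q j b} : ℕ) * X
      = ∑ o ∈ t j, (X : ℕ[X]) ^ (if o = none then 0 else 1) := by
    intro j
    rw [sum_filter, Fintype.sum_option]
    simp only [reduceCtorEq, false_imp_iff, implies_true, if_true, if_false, pow_zero, pow_one,
      Option.some.injEq, forall_eq']
    rw [← sum_filter, sum_const, nsmul_eq_mul, ← map_natCast C, Nat.cast_id]
  have hterm : ∀ σ : ι → Option Bool,
      ∏ j, (X : ℕ[X]) ^ (if σ j = none then 0 else 1) = X ^ #{j | σ j ≠ none} := by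
    intro σ
    rw [prod_pow_eq_pow_sum]
    simp [sum_ite]
  rw [prod_congr rfl fun j _ => hfactor j, prod_univ_sum, finsetSum_coeff]
  simp_rw [hterm, coeff_X_pow]
  rw [sum_boole, Nat.cast_id]
  congr 1
  ext σ
  simp [t, eq_comm, and_comm, imp_not_comm]

lemma card_signPatterns_codim_eq (i : ℕ) :
    #{σ : ι → Option Bool | #{j | σ j ≠ none} = i} = (Fintype.card ι).choose i * 2 ^ i := by
  have h := card_signPatterns_avoiding_eq_coeff (fun (_ : ι) (_ : Bool) => False) i
  simp only [false_and, exists_false, not_false_eq_true, and_true, filter_true, card_univ,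
    Fintype.card_bool, prod_const] at h
  rw [h, coeff_one_add_C_mul_X_pow, Nat.cast_id]

end SignPatternCount

lemma exists_and_eq_some_or_exists_not_and_eq_some {ι : Type*} [Fintype ι]
    (q : ι → Bool → Prop) {σ : ι → Option Bool} (hσ : 0 < #{j | σ j ≠ none}) :
    (∃ j b, q j b ∧ σ j = some b) ∨ (∃ j b, ¬ q j b ∧ σ j = some b) := by
  obtain ⟨j, hj⟩ := card_pos.1 hσ
  obtain ⟨b, hb⟩ := Option.ne_none_iff_exists'.1 (mem_filter.1 hj).2
  by_cases hq : q j b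
  exacts [.inl ⟨j, b, hq, hb⟩, .inr ⟨j, b, hq, hb⟩]

lemma card_eq_none_eq_sub_iff {n i : ℕ} (σ : Fin n → Option Bool) (hi : i ≤ n) :
    #{j | σ j = none} = n - i ↔ #{j | σ j ≠ none} = i := by
  have := card_filter_add_card_filter_not (s := univ) (p := fun j => σ j = none)
  simp only [card_univ, Fintype.card_fin, ← ne_eq] at this
  omega

section LiftableBall

instance (k l j : ℕ) : DecidablePred (inBall k l j) :=
  fun _ => inferInstanceAs (Decidable (_ ∨ _))

lemma one_add_card_inBall_mul_X (k l j : ℕ) :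
    (1 + C (#{b | inBall k l j b} : ℕ) * X : ℕ[X])
      = if j < k then 1 + C 2 * X else if j < k + l then 1 + X else 1 := by
  unfold inBall
  split_ifs <;> simp [*, filter_eq']

lemma one_add_card_not_inBall_mul_X (k l j : ℕ) :
    (1 + C (#{b | ¬ inBall k l j b} : ℕ) * X : ℕ[X])
      = if j < k then 1 else if j < k + l then 1 + X else 1 + C 2 * X := by
  unfold inBall
  split_ifs <;> simp [*, filter_eq']

lemma card_signPatterns_avoiding_ball {n k l m : ℕ} (h : k + l + m = n) (i : ℕ) :
    #{σ : Fin n → Option Bool |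
        #{j | σ j ≠ none} = i ∧
          ¬ ∃ (j : Fin n) (b : Bool), inBall k l j.1 b ∧ σ j = some b}
      = ∑ j ∈ range (i + 1), m.choose j * 2 ^ j * l.choose (i - j) := by
  have hcount := card_signPatterns_avoiding_eq_coeff (fun (j : Fin n) b => inBall k l j b) i
  rw [prod_congr rfl fun (j : Fin n) _ => one_add_card_not_inBall_mul_X k l j,
    prod_fin_ite_lt_ite_lt h, one_pow, one_mul, mul_comm,
    coeff_one_add_C_mul_X_pow_mul_one_add_X_pow] at hcount
  simp only [Nat.cast_id] at hcount
  -- the `Decidable` instance of `∃ j : Fin n` differs from the one in the general lemma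
  convert hcount

lemma card_signPatterns_avoiding_not_ball {n k l m : ℕ} (h : k + l + m = n) (i : ℕ) :
    #{σ : Fin n → Option Bool |
        #{j | σ j ≠ none} = i ∧
          ¬ ∃ (j : Fin n) (b : Bool), ¬ inBall k l j.1 b ∧ σ j = some b}
      = ∑ j ∈ range (i + 1), k.choose j * 2 ^ j * l.choose (i - j) := by
  have hcount := card_signPatterns_avoiding_eq_coeff (fun (j : Fin n) b => ¬ inBall k l j b) i
  simp only [not_not] at hcount
  rw [prod_congr rfl fun (j : Fin n) _ => one_add_card_inBall_mul_X k l j,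
    prod_fin_ite_lt_ite_lt h, one_pow, mul_one,
    coeff_one_add_C_mul_X_pow_mul_one_add_X_pow] at hcount
  simp only [Nat.cast_id] at hcount
  convert hcount

end LiftableBall

theorem face_count_liftable_general (d k l m i : ℕ) (hsum : k + l + m = d + 1) (hi1 : 2 ≤ i)
    (hi2 : i ≤ d + 1) :
    ({G : Set (Fin (d + 1) → ℝ) |
        IsFaceDim (stdCube (d + 1)) G (d + 1 - i) ∧
        (∃ j : Fin (d + 1), ∃ b : Bool, inBall k l j.1 b ∧ G ⊆ cubeFacet (d + 1) j b) ∧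
        (∃ j : Fin (d + 1), ∃ b : Bool, ¬ inBall k l j.1 b ∧
          G ⊆ cubeFacet (d + 1) j b)}.ncard : ℤ)
      = ((d + 1).choose i : ℤ) * 2 ^ i
        - ∑ j ∈ Finset.range (i + 1),
            (l.choose (i - j) : ℤ) * ((k.choose j : ℤ) + (m.choose j : ℤ)) * 2 ^ j := by
  rw [ncard_setOf_isFaceDim_stdCube_and]
  simp only [cubeFace_subset_cubeFacet_iff, card_eq_none_eq_sub_iff _ hi2]
  rw [ncard_eq_toFinset_card', toFinset_ofPred]
  have hsplit := card_filter_and_add_card_filter_not_add_card_filter_not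
    {σ : Fin (d + 1) → Option Bool | #{j | σ j ≠ none} = i} _ _ fun σ hσ =>
      exists_and_eq_some_or_exists_not_and_eq_some (fun (j : Fin (d + 1)) b => inBall k l j.1 b)
        (by rw [(mem_filter.1 hσ).2]; omega)
  simp only [filter_filter] at hsplit
  rw [card_signPatterns_avoiding_ball hsum, card_signPatterns_avoiding_not_ball hsum,
    card_signPatterns_codim_eq, Fintype.card_fin] at hsplit
  have hsum_split : ∑ j ∈ range (i + 1),
      (l.choose (i - j) : ℤ) * ((k.choose j : ℤ) + (m.choose j : ℤ)) * 2 ^ j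
      = ∑ j ∈ range (i + 1), (m.choose j * 2 ^ j * l.choose (i - j) : ℕ)
        + ∑ j ∈ range (i + 1), (k.choose j * 2 ^ j * l.choose (i - j) : ℕ) := by
    push_cast
    rw [← sum_add_distrib]
    exact sum_congr rfl fun j _ => by ring
  rw [hsum_split, eq_sub_iff_add_eq, ← add_assoc]
  exact_mod_cast hsplit

/-- Face counts of the liftable cubical `d`-polytope `P(k,l,m)`: the number of
`(d+1−i)`-faces `G` of the `(d+1)`-cube lying in some facet of `B(k,l,m)` and
in some facet of the complement equals
`C(d+1,i)·2^i − Σ_{j=0}^{i} C(l,i−j)·(C(k,j)+C(m,j))·2^j`. -/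
theorem face_count_liftable (d k l m i : ℕ) (hd : 2 ≤ d) (hl : 1 ≤ l)
    (hsum : k + l + m = d + 1) (hi1 : 2 ≤ i) (hi2 : i ≤ d + 1) :
    ({G : Set (Fin (d + 1) → ℝ) |
        IsFaceDim (stdCube (d + 1)) G (d + 1 - i) ∧
        (∃ j : Fin (d + 1), ∃ b : Bool, inBall k l j.1 b ∧ G ⊆ cubeFacet (d + 1) j b) ∧
        (∃ j : Fin (d + 1), ∃ b : Bool, ¬ inBall k l j.1 b ∧
          G ⊆ cubeFacet (d + 1) j b)}.ncard : ℤ)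
      = ((d + 1).choose i : ℤ) * 2 ^ i
        - ∑ j ∈ Finset.range (i + 1),
            (l.choose (i - j) : ℤ) * ((k.choose j : ℤ) + (m.choose j : ℤ)) * 2 ^ j :=
  face_count_liftable_general d k l m i hsum hi1 hi2
end

section
/- For integers i ≥ 0 and k, l, m ≥ 1 define δ_i(k,l,m) = Σ_{j=0}^{i} C(l, i−j)·( C(k,j) + C(m,j) )·2^j. Then: (a) δ_i(k,l,m) ≥ δ_i(k−1, l, m+1) whenever k > m; (b) δ_i(k,l,m) ≥ δ_i(k+1, l−2, m+1) whenever l ≥ 3 (so that l−2 ≥ 1); (c) δ_i(k,2,m) ≥ δ_i(k,1,m+1) whenever k > m; and (d) δ_i(k,2,k) = δ_i(k+1,1,k). -/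
/-- `δ_i(k,l,m) = Σ_{j=0}^{i} C(l, i−j)·(C(k,j) + C(m,j))·2^j`. -/
def deltaF (i k l m : ℕ) : ℕ :=
  ∑ j ∈ Finset.range (i + 1), l.choose (i - j) * (k.choose j + m.choose j) * 2 ^ j

/-- Auxiliary sum. -/
def auxG (i k l : ℕ) : ℕ :=
  ∑ j ∈ Finset.range i, l.choose (i - 1 - j) * k.choose j * 2 ^ j

lemma deltaF_symm (i k l m : ℕ) : deltaF i k l m = deltaF i m l k := by
  simp [deltaF, add_comm]

lemma deltaF_k (i k l m : ℕ) :
    deltaF i (k + 1) l m = deltaF i k l m + 2 * auxG i k l := by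
  unfold deltaF auxG
  rw [Finset.sum_range_succ' (fun j => l.choose (i - j) * ((k+1).choose j + m.choose j) * 2 ^ j) i,
      Finset.sum_range_succ' (fun j => l.choose (i - j) * (k.choose j + m.choose j) * 2 ^ j) i]
  have h : ∀ j ∈ Finset.range i,
      l.choose (i - (j + 1)) * ((k+1).choose (j+1) + m.choose (j+1)) * 2 ^ (j+1)
        = l.choose (i - (j + 1)) * (k.choose (j+1) + m.choose (j+1)) * 2 ^ (j+1)
          + 2 * (l.choose (i - 1 - j) * k.choose j * 2 ^ j) := by
    intro j _
    have e : i - 1 - j = i - (j + 1) := by omega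
    rw [e, Nat.choose_succ_succ, pow_succ]
    ring
  rw [Finset.sum_congr rfl h, Finset.sum_add_distrib, Finset.mul_sum]
  simp only [Nat.choose_zero_right]
  ring

lemma deltaF_m (i k l m : ℕ) :
    deltaF i k l (m + 1) = deltaF i k l m + 2 * auxG i m l := by
  rw [deltaF_symm i k l (m+1), deltaF_k, deltaF_symm i m l k]

lemma deltaF_l (i k l m : ℕ) :
    deltaF i k (l + 1) m = deltaF i k l m + (auxG i k l + auxG i m l) := by
  unfold deltaF auxG
  rw [Finset.sum_range_succ (fun j => (l+1).choose (i - j) * (k.choose j + m.choose j) * 2 ^ j) i,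
      Finset.sum_range_succ (fun j => l.choose (i - j) * (k.choose j + m.choose j) * 2 ^ j) i]
  have h : ∀ j ∈ Finset.range i,
      (l+1).choose (i - j) * (k.choose j + m.choose j) * 2 ^ j
        = l.choose (i - j) * (k.choose j + m.choose j) * 2 ^ j
          + (l.choose (i - 1 - j) * k.choose j * 2 ^ j
             + l.choose (i - 1 - j) * m.choose j * 2 ^ j) := by
    intro j hj
    have hj' : j < i := Finset.mem_range.mp hj
    have e : i - j = (i - 1 - j) + 1 := by omega
    rw [e, Nat.choose_succ_succ]
    ring
  rw [Finset.sum_congr rfl h, Finset.sum_add_distrib, Finset.sum_add_distrib]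
  simp only [Nat.sub_self, Nat.choose_zero_right]
  ring

lemma auxG_mono_k (i l : ℕ) {k k' : ℕ} (h : k ≤ k') : auxG i k l ≤ auxG i k' l := by
  refine Finset.sum_le_sum fun j _ => ?_
  exact Nat.mul_le_mul_right _ (Nat.mul_le_mul_left _ (Nat.choose_le_choose _ h))

lemma auxG_mono_l (i k : ℕ) {l l' : ℕ} (h : l ≤ l') : auxG i k l ≤ auxG i k l' := by
  refine Finset.sum_le_sum fun j _ => ?_
  exact Nat.mul_le_mul_right _ (Nat.mul_le_mul_right _ (Nat.choose_le_choose _ h))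

/-- Monotonicity properties of `δ_i`:
(a) `δ_i(k,l,m) ≥ δ_i(k−1,l,m+1)` for `k > m`;
(b) `δ_i(k,l,m) ≥ δ_i(k+1,l−2,m+1)` for `l ≥ 3`;
(c) `δ_i(k,2,m) ≥ δ_i(k,1,m+1)` for `k > m`;
(d) `δ_i(k,2,k) = δ_i(k+1,1,k)`. -/
theorem deltaF_inequalities (i k l m : ℕ) (hk : 1 ≤ k) (hl : 1 ≤ l) (hm : 1 ≤ m) :
    (m < k → deltaF i (k - 1) l (m + 1) ≤ deltaF i k l m) ∧
    (3 ≤ l → deltaF i (k + 1) (l - 2) (m + 1) ≤ deltaF i k l m) ∧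
    (m < k → deltaF i k 1 (m + 1) ≤ deltaF i k 2 m) ∧
    (deltaF i k 2 k = deltaF i (k + 1) 1 k) := by
  refine ⟨?_, ?_, ?_, ?_⟩
  · intro h
    obtain ⟨k', rfl⟩ : ∃ k', k = k' + 1 := ⟨k - 1, by omega⟩
    simp only [Nat.add_sub_cancel]
    have h1 := deltaF_m i k' l m
    have h2 := deltaF_k i k' l m
    have h3 : auxG i m l ≤ auxG i k' l := auxG_mono_k i l (by omega)
    omega
  · intro h
    obtain ⟨l', rfl⟩ : ∃ l', l = l' + 2 := ⟨l - 2, by omega⟩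
    have e : l' + 2 - 2 = l' := by omega
    rw [e]
    have h1 := deltaF_m i (k + 1) l' m
    have h2 := deltaF_k i k l' m
    have h3 : deltaF i k (l' + 2) m
        = deltaF i k (l' + 1) m + (auxG i k (l' + 1) + auxG i m (l' + 1)) :=
      deltaF_l i k (l' + 1) m
    have h4 := deltaF_l i k l' m
    have h5 : auxG i k l' ≤ auxG i k (l' + 1) := auxG_mono_l i k (by omega)
    have h6 : auxG i m l' ≤ auxG i m (l' + 1) := auxG_mono_l i m (by omega)
    omega
  · intro h
    have h1 := deltaF_m i k 1 m
    have h2 : deltaF i k 2 m = deltaF i k 1 m + (auxG i k 1 + auxG i m 1) :=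
      deltaF_l i k 1 m
    have h3 : auxG i m 1 ≤ auxG i k 1 := auxG_mono_k i 1 (by omega)
    omega
  · have h1 : deltaF i k 2 k = deltaF i k 1 k + (auxG i k 1 + auxG i k 1) :=
      deltaF_l i k 1 k
    have h2 := deltaF_k i k 1 k
    omega
end
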